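/- Let v_1, ..., v_m ∈ Z^2 be primitive vectors forming a complete smooth fan (counterclockwise, det(v_i, v_{i+1}) = 1 for all i mod m), with m ≥ 3. Fix an index j and insert the vector w = v_j + v_{j+1} between v_j and v_{j+1} to get a new sequence of m+1 vectors. Then the new sequence is again a complete smooth fan, and the quantity 3m + Σ_i D_i^2 (where D_i^2 is the integer with v_{i-1} + v_{i+1} + D_i^2 v_i = 0) is unchanged by this operation. -/

import Mathlib

/-!
Since `v i ≠ 0`, the relation `v (i - 1) + v (i + 1) + D i • v i = 0` determines `D i`, so the
self-intersection numbers of the blown-up fan can be read off from the old vectors: they agree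
with the old ones, shifted by one, except at the new vector (`-1`) and its two neighbours (one
less than before). Summing over a period that starts at `j` rather than `0`, which periodicity
allows, the sum drops by `3` while the number of vectors grows by `1`.
-/

open Finset

def det2 (a b : ℤ × ℤ) : ℤ := a.1 * b.2 - a.2 * b.1
def IsPrimitive (a : ℤ × ℤ) : Prop := Int.gcd a.1 a.2 = 1

open Function

lemma det2_add_right_self (a b : ℤ × ℤ) : det2 a (a + b) = det2 a b := by
  simp only [det2, Prod.fst_add, Prod.snd_add]; ring

lemma det2_add_left_self (a b : ℤ × ℤ) : det2 (a + b) b = det2 a b := by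
  simp only [det2, Prod.fst_add, Prod.snd_add]; ring

lemma isPrimitive_of_det2_eq_one {a b : ℤ × ℤ} (h : det2 a b = 1) : IsPrimitive a :=
  Int.isCoprime_iff_gcd_eq_one.mp ⟨b.2, -b.1, by rw [← h, det2]; ring⟩

lemma ne_zero_of_det2_eq_one {a b : ℤ × ℤ} (h : det2 a b = 1) : a ≠ 0 := by
  rintro rfl
  simp [det2] at h

theorem Function.Periodic.sum_range_add {M : Type*} [AddCommMonoid M] {f : ℤ → M} {n : ℕ}
    (hf : Periodic f n) (a : ℤ) : ∑ i ∈ range n, f (a + i) = ∑ i ∈ range n, f i := by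
  have step : Periodic (fun a => ∑ i ∈ range n, f (a + i)) 1 := by
    intro a
    cases n with
    | zero => simp
    | succ k =>
      dsimp only
      rw [sum_range_succ, sum_range_succ', Nat.cast_zero, add_zero, ← hf a]
      push_cast
      simp only [add_assoc, add_comm (1 : ℤ)]
  simpa using step.zsmul a 0

def IsSelfIntersection (v : ℤ → ℤ × ℤ) (D : ℤ → ℤ) : Prop :=
  ∀ i, v (i - 1) + v (i + 1) + D i • v i = 0

lemma selfIntersection_unique {x y z : ℤ × ℤ} (hy : y ≠ 0) {a b : ℤ}
    (ha : x + z + a • y = 0) (hb : x + z + b • y = 0) : a = b :=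
  smul_left_injective ℤ hy (add_left_cancel (ha.trans hb.symm))

lemma IsSelfIntersection.periodic {v : ℤ → ℤ × ℤ} {D : ℤ → ℤ} {T : ℤ}
    (hD : IsSelfIntersection v D) (hv : Periodic v T) (hne : ∀ i, v i ≠ 0) : Periodic D T := by
  intro i
  refine selfIntersection_unique (hne i) ?_ (hD i)
  have h := hD (i + T)
  rwa [← sub_add_eq_add_sub, add_right_comm i T 1, hv, hv, hv] at h

/-- The `(m + 1)`-periodic `v'` is `v` with `v j + v (j + 1)` inserted after position `j`,
read on the period `j, …, j + m` (and one step beyond). -/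
structure IsBlowup (m : ℕ) (v v' : ℤ → ℤ × ℤ) (j : ℤ) : Prop where
  periodic : Periodic v' (m + 1)
  eq_self : v' j = v j
  eq_add : v' (j + 1) = v j + v (j + 1)
  eq_shift : ∀ i, j + 2 ≤ i → i ≤ j + m + 1 → v' i = v (i - 1)

namespace IsBlowup

variable {m : ℕ} {v v' : ℤ → ℤ × ℤ} {j : ℤ}

lemma of_window (hj0 : 0 ≤ j) (hv : Periodic v m) (hv' : Periodic v' (m + 1))
    (hlow : ∀ i, 0 ≤ i → i ≤ j → v' i = v i) (hnew : v' (j + 1) = v j + v (j + 1))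
    (hhigh : ∀ i, j + 1 < i → i ≤ m → v' i = v (i - 1)) : IsBlowup m v v' j where
  periodic := hv'
  eq_self := hlow j hj0 le_rfl
  eq_add := hnew
  eq_shift i h₁ h₂ := by
    rcases le_or_gt i m with him | him
    · exact hhigh i (by omega) him
    · rw [← hv'.sub_eq, hlow _ (by omega) (by omega), ← hv.sub_eq (i - 1)]
      ring_nf

lemma det2_eq_one (hb : IsBlowup m v v' j) (hdet : ∀ i, det2 (v i) (v (i + 1)) = 1) (i : ℤ) :
    det2 (v' i) (v' (i + 1)) = 1 := by
  have hper : Periodic (fun i => det2 (v' i) (v' (i + 1))) (m + 1) := fun i => by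
    simp only [add_right_comm i, hb.periodic _]
  obtain ⟨y, ⟨hy₁, hy₂⟩, hy⟩ := hper.exists_mem_Ico (by positivity) i j
  rw [show det2 (v' i) (v' (i + 1)) = det2 (v' y) (v' (y + 1)) from hy]
  rcases (by omega : y = j ∨ y = j + 1 ∨ j + 2 ≤ y) with rfl | rfl | hjy
  · rw [hb.eq_self, hb.eq_add, det2_add_right_self, hdet]
  · rw [hb.eq_add, hb.eq_shift (j + 1 + 1) (by omega) (by omega), add_sub_cancel_right,
      det2_add_left_self, hdet]
  · rw [hb.eq_shift y hjy (by omega), hb.eq_shift (y + 1) (by omega) (by omega),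
      add_sub_cancel_right]
    simpa only [sub_add_cancel] using hdet (y - 1)

lemma selfIntersection_eq (hb : IsBlowup m v v' j) (hm : 2 ≤ m) (hv : Periodic v m)
    (hdet : ∀ i, det2 (v i) (v (i + 1)) = 1) {D D' : ℤ → ℤ}
    (hD : IsSelfIntersection v D) (hD' : IsSelfIntersection v' D') :
    D' j = D j - 1 ∧ D' (j + 1) = -1 ∧ D' (j + 2) = D (j + 1) - 1 ∧
      ∀ i, j + 3 ≤ i → i ≤ j + m → D' i = D (i - 1) := by
  have hne i : v' i ≠ 0 := ne_zero_of_det2_eq_one (hb.det2_eq_one hdet i)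
  refine ⟨selfIntersection_unique (hne j) (hD' j) ?_,
    selfIntersection_unique (hne (j + 1)) (hD' (j + 1)) ?_,
    selfIntersection_unique (hne (j + 2)) (hD' (j + 2)) ?_,
    fun i h₁ h₂ => selfIntersection_unique (hne i) (hD' i) ?_⟩
  · rw [← hb.periodic, hb.eq_shift _ (by omega) (by omega), hb.eq_self, hb.eq_add,
      show j - 1 + (m + 1) - 1 = j - 1 + m by ring, hv]
    linear_combination (norm := module) hD j
  · rw [add_sub_cancel_right, hb.eq_self, hb.eq_add, hb.eq_shift _ (by omega) (by omega),
      add_sub_cancel_right]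
    module
  · rw [show j + 2 - 1 = j + 1 by ring, hb.eq_add, hb.eq_shift _ (by omega) (by omega),
      hb.eq_shift _ (by omega) (by omega), show j + 2 + 1 - 1 = j + 1 + 1 by ring,
      show j + 2 - 1 = j + 1 by ring]
    have h := hD (j + 1)
    rw [add_sub_cancel_right] at h
    linear_combination (norm := module) h
  · rw [hb.eq_shift _ (by omega) (by omega), hb.eq_shift _ (by omega) (by omega),
      hb.eq_shift _ (by omega) (by omega), add_sub_cancel_right]
    have h := hD (i - 1)
    rw [sub_add_cancel] at h
    linear_combination (norm := module) h

end IsBlowup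

lemma sum_range_of_blowup {m : ℕ} (hm : 2 ≤ m) {D D' : ℤ → ℤ} {j : ℤ}
    (h₀ : D' j = D j - 1) (h₁ : D' (j + 1) = -1) (h₂ : D' (j + 2) = D (j + 1) - 1)
    (hrest : ∀ i, j + 3 ≤ i → i ≤ j + m → D' i = D (i - 1)) :
    ∑ i ∈ range (m + 1), D' (j + i) = ∑ i ∈ range m, D (j + i) - 3 := by
  obtain ⟨n, rfl⟩ : ∃ n, m = n + 2 := ⟨m - 2, by omega⟩
  have hmid : ∑ i ∈ range n, D' (j + (i + 3 : ℕ)) = ∑ i ∈ range n, D (j + (i + 2 : ℕ)) :=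
    sum_congr rfl fun i hi => by
      rw [mem_range] at hi
      rw [hrest _ (by omega) (by omega)]
      push_cast
      ring_nf
  simp only [sum_range_succ' _ (n + 2), sum_range_succ' _ (n + 1), sum_range_succ' _ n,
    add_assoc, Nat.reduceAdd, hmid]
  push_cast
  rw [add_zero, h₀, h₁, h₂]
  ring

theorem stmt3_general (m : ℕ) (hm : 3 ≤ m) (v : ℤ → ℤ × ℤ) (j : ℤ)
    (hj0 : 0 ≤ j)
    (hper : ∀ i, v (i + m) = v i)
    (hdet : ∀ i, det2 (v i) (v (i + 1)) = 1)
    (v' : ℤ → ℤ × ℤ)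
    (hper' : ∀ i, v' (i + (m + 1)) = v' i)
    (hlow : ∀ i, 0 ≤ i → i ≤ j → v' i = v i)
    (hnew : v' (j + 1) = v j + v (j + 1))
    (hhigh : ∀ i, j + 1 < i → i ≤ m → v' i = v (i - 1)) :
    ((∀ i, IsPrimitive (v' i)) ∧ (∀ i, det2 (v' i) (v' (i + 1)) = 1)) ∧
    ∀ D D' : ℤ → ℤ,
      (∀ i, v (i - 1) + v (i + 1) + D i • v i = 0) →
      (∀ i, v' (i - 1) + v' (i + 1) + D' i • v' i = 0) →
      3 * (m : ℤ) + ∑ i ∈ Finset.range m, D (i : ℤ)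
        = 3 * ((m : ℤ) + 1) + ∑ i ∈ Finset.range (m + 1), D' (i : ℤ) := by
  have hb : IsBlowup m v v' j := .of_window hj0 hper hper' hlow hnew hhigh
  have hdet' := hb.det2_eq_one hdet
  refine ⟨⟨fun i => isPrimitive_of_det2_eq_one (hdet' i), hdet'⟩,
    fun D D' (hD : IsSelfIntersection v D) (hD' : IsSelfIntersection v' D') => ?_⟩
  obtain ⟨h₀, h₁, h₂, hrest⟩ := hb.selfIntersection_eq (by omega) hper hdet hD hD'
  have hDper : Periodic D m := hD.periodic hper fun i => ne_zero_of_det2_eq_one (hdet i)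
  have hD'per : Periodic D' (m + 1 : ℕ) := by
    simpa using hD'.periodic hper' fun i => ne_zero_of_det2_eq_one (hdet' i)
  rw [← hDper.sum_range_add j, ← hD'per.sum_range_add j,
    sum_range_of_blowup (by omega) h₀ h₁ h₂ hrest]
  ring

/-- Toric blow-up invariance: inserting `w = v j + v (j+1)` between `v j` and `v (j+1)`
in a complete smooth fan gives again a complete smooth fan, and `3m + ∑ D i²`
is unchanged.  Fans are encoded as periodic sequences `ℤ → ℤ × ℤ`. -/
theorem stmt3 (m : ℕ) (hm : 3 ≤ m) (v : ℤ → ℤ × ℤ) (j : ℤ)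
    (hj0 : 0 ≤ j) (hjm : j < m)
    (hper : ∀ i, v (i + m) = v i)
    (hprim : ∀ i, IsPrimitive (v i))
    (hdet : ∀ i, det2 (v i) (v (i + 1)) = 1)
    (v' : ℤ → ℤ × ℤ)
    (hper' : ∀ i, v' (i + (m + 1)) = v' i)
    (hlow : ∀ i, 0 ≤ i → i ≤ j → v' i = v i)
    (hnew : v' (j + 1) = v j + v (j + 1))
    (hhigh : ∀ i, j + 1 < i → i ≤ m → v' i = v (i - 1)) :
    ((∀ i, IsPrimitive (v' i)) ∧ (∀ i, det2 (v' i) (v' (i + 1)) = 1)) ∧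
    ∀ D D' : ℤ → ℤ,
      (∀ i, v (i - 1) + v (i + 1) + D i • v i = 0) →
      (∀ i, v' (i - 1) + v' (i + 1) + D' i • v' i = 0) →
      3 * (m : ℤ) + ∑ i ∈ Finset.range m, D (i : ℤ)
        = 3 * ((m : ℤ) + 1) + ∑ i ∈ Finset.range (m + 1), D' (i : ℤ) :=
  stmt3_general m hm v j hj0 hper hdet v' hper' hlow hnew hhigh
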